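/- Let S be a finite nonempty set of positive integers with k = max S ∈ S, and define G_s : ℕ → ℤ by G_s(0) = 0 and G_s(n) = max_{j ∈ S, j ≤ n} (j - G_s(n - j)) for n > 0 (G_s(n) = 0 if no such j exists). Then for every s ∈ S and every i ≥ 1, G_s(s + 2ik) = k - G_s(s + (2i - 1)k). -/

import Mathlib

/-!
Write `n = s + m k + d` with `s ∈ S` and `0 ≤ d < k`. Then `G n` lies within `d` of `s` when `m`
is even and of `k - s` when `m` is odd. For `m = 0` this follows from `0 ≤ G n ≤ n`; in the
inductive step, taking `k` beans gives the lower bound, while any move `j` either is at most `d`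
(and scores at most `j ≤ d` net, as `G ≥ 0`) or lands in the previous block, where the inductive
hypothesis applies. At `d = 0` the bound is an equality, and `2 i = (2 i - 1) + 1`.
-/

def IsOptimalNetScore (S : Finset ℕ) (G : ℕ → ℤ) : Prop :=
  G 0 = 0 ∧ ∀ n : ℕ, 0 < n →
    G n = if h : (S.filter (fun j => j ≤ n)).Nonempty
      then (S.filter (fun j => j ≤ n)).sup' h (fun j => (j : ℤ) - G (n - j))
      else 0

/-- The largest legal move from a pile of `n` beans, or `0` if there is none. -/
def maxMove (S : Finset ℕ) (n : ℕ) : ℕ :=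
  (S.filter (fun j => j ≤ n)).sup id

def alternatingValue (k s : ℕ) : ℕ → ℤ
  | 0 => s
  | m + 1 => k - alternatingValue k s m

section maxMove

variable {S : Finset ℕ}

theorem maxMove_le (n : ℕ) : maxMove S n ≤ n :=
  Finset.sup_le fun _ hj => (Finset.mem_filter.1 hj).2

theorem le_maxMove {j n : ℕ} (hj : j ∈ S) (hjn : j ≤ n) : j ≤ maxMove S n :=
  Finset.le_sup (f := id) (Finset.mem_filter.2 ⟨hj, hjn⟩)

theorem maxMove_sub_maxMove_le (n : ℕ) : maxMove S (n - maxMove S n) ≤ maxMove S n :=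
  Finset.sup_le fun _ hj =>
    le_maxMove (Finset.mem_filter.1 hj).1 (((Finset.mem_filter.1 hj).2).trans (Nat.sub_le _ _))

end maxMove

theorem alternatingValue_mem_Icc {k s : ℕ} (hs : s ≤ k) (m : ℕ) :
    alternatingValue k s m ∈ Set.Icc (0 : ℤ) k := by
  induction m with
  | zero => exact ⟨Nat.cast_nonneg s, Nat.cast_le.2 hs⟩
  | succ m ih =>
    obtain ⟨h₀, h₁⟩ := ih
    exact ⟨by rw [alternatingValue]; linarith, by rw [alternatingValue]; linarith⟩

namespace IsOptimalNetScore

variable {S : Finset ℕ} {G : ℕ → ℤ}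

theorem sub_le_apply (hG : IsOptimalNetScore S G) {n j : ℕ} (hn : 0 < n) (hj : j ∈ S)
    (hjn : j ≤ n) : (j : ℤ) - G (n - j) ≤ G n := by
  have hmem : j ∈ S.filter (fun j => j ≤ n) := Finset.mem_filter.2 ⟨hj, hjn⟩
  rw [hG.2 n hn, dif_pos ⟨j, hmem⟩]
  exact Finset.le_sup' (fun j : ℕ => (j : ℤ) - G (n - j)) hmem

theorem apply_le (hG : IsOptimalNetScore S G) {n : ℕ} {c : ℤ} (hc : 0 ≤ c)
    (h : ∀ j ∈ S, j ≤ n → (j : ℤ) - G (n - j) ≤ c) : G n ≤ c := by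
  rcases n.eq_zero_or_pos with rfl | hn
  · exact hG.1.trans_le hc
  rw [hG.2 n hn]
  split_ifs
  · exact Finset.sup'_le _ _ fun j hj => h j (Finset.mem_filter.1 hj).1 (Finset.mem_filter.1 hj).2
  · exact hc

theorem nonneg_and_le_maxMove (hG : IsOptimalNetScore S G) (hpos : ∀ j ∈ S, 0 < j) (n : ℕ) :
    0 ≤ G n ∧ G n ≤ maxMove S n := by
  induction n using Nat.strong_induction_on with
  | _ n ih =>
  refine ⟨?_, hG.apply_le (Nat.cast_nonneg _) fun j hj hjn => ?_⟩
  · rcases n.eq_zero_or_pos with rfl | hn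
    · exact hG.1.ge
    rw [hG.2 n hn]
    split_ifs with hne
    · obtain ⟨j₀, hj₀, hsup⟩ := Finset.exists_mem_eq_sup _ hne id
      have hj₀n : j₀ ≤ n := (Finset.mem_filter.1 hj₀).2
      -- the largest move leaves a pile whose own largest move is no larger
      have hG_le : G (n - j₀) ≤ j₀ := by
        have h := maxMove_sub_maxMove_le (S := S) n
        rw [show maxMove S n = j₀ from hsup] at h
        exact (ih _ (by have := hpos j₀ (Finset.mem_filter.1 hj₀).1; omega)).2.trans
          (Nat.cast_le.2 h)
      exact Finset.le_sup'_of_le _ hj₀ (by simpa using hG_le)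
    · exact le_rfl
  · have := (ih (n - j) (by have := hpos j hj; omega)).1
    have := Nat.cast_le (α := ℤ) |>.2 (le_maxMove hj hjn)
    linarith

theorem apply_nonneg (hG : IsOptimalNetScore S G) (hpos : ∀ j ∈ S, 0 < j) (n : ℕ) : 0 ≤ G n :=
  (hG.nonneg_and_le_maxMove hpos n).1

theorem apply_le_self (hG : IsOptimalNetScore S G) (hpos : ∀ j ∈ S, 0 < j) (n : ℕ) :
    G n ≤ n :=
  (hG.nonneg_and_le_maxMove hpos n).2.trans (Nat.cast_le.2 (maxMove_le n))

theorem abs_sub_alternatingValue_le (hG : IsOptimalNetScore S G) (hpos : ∀ j ∈ S, 0 < j)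
    {k s : ℕ} (hk : IsGreatest (S : Set ℕ) k) (hs : s ∈ S) (m : ℕ) {d : ℕ} (hd : d < k) :
    |G (s + m * k + d) - alternatingValue k s m| ≤ d := by
  induction m generalizing d with
  | zero =>
    rw [zero_mul, add_zero, alternatingValue]
    have hsd := hG.sub_le_apply (n := s + d) (by have := hpos s hs; omega) hs (by omega)
    rw [Nat.add_sub_cancel_left] at hsd
    have := hG.apply_le_self hpos d
    have := hG.apply_le_self hpos (s + d)
    push_cast at *
    exact abs_sub_le_iff.2 ⟨by linarith, by linarith⟩
  | succ m ih =>
    rw [show s + (m + 1) * k + d = s + m * k + d + k by ring, alternatingValue]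
    have hv := alternatingValue_mem_Icc (hk.2 hs) m
    have hlow := hG.sub_le_apply (n := s + m * k + d + k) (by omega) hk.1 (by omega)
    rw [Nat.add_sub_cancel] at hlow
    have hih := abs_sub_le_iff.1 (ih hd)
    refine abs_sub_le_iff.2 ⟨?_, by linarith⟩
    have hup : G (s + m * k + d + k) ≤ k - alternatingValue k s m + d := by
      refine hG.apply_le (by linarith [hv.2]) fun j hj hjn => ?_
      by_cases hjd : j ≤ d
      · have := hG.apply_nonneg hpos (s + m * k + d + k - j)
        have : (j : ℤ) ≤ d := Nat.cast_le.2 hjd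
        linarith [hv.2]
      · -- a move larger than `d` lands in the previous block, at offset `k + d - j < k`
        have hjk : j ≤ k := hk.2 hj
        have hj' := abs_sub_le_iff.1 (ih (d := k + d - j) (by omega))
        rw [show s + m * k + (k + d - j) = s + m * k + d + k - j by omega,
          Nat.cast_sub (by omega)] at hj'
        push_cast at hj'
        linarith [hj'.2]
    linarith

theorem apply_add_mul (hG : IsOptimalNetScore S G) (hpos : ∀ j ∈ S, 0 < j) {k s : ℕ}
    (hk : IsGreatest (S : Set ℕ) k) (hs : s ∈ S) (m : ℕ) :
    G (s + m * k) = alternatingValue k s m := by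
  simpa [sub_eq_zero] using hG.abs_sub_alternatingValue_le hpos hk hs m (d := 0) (hpos k hk.1)

end IsOptimalNetScore

theorem stmt_7_general (S : Finset ℕ) (hS : S.Nonempty) (hpos : ∀ j ∈ S, 0 < j)
    (k : ℕ) (hk : k = S.max' hS)
    (Gs : ℕ → ℤ) (h0 : Gs 0 = 0)
    (hG : ∀ n : ℕ, 0 < n →
      Gs n = if h : (S.filter (fun j => j ≤ n)).Nonempty
        then (S.filter (fun j => j ≤ n)).sup' h (fun j => (j : ℤ) - Gs (n - j))
        else 0) :
    ∀ s ∈ S, ∀ i : ℕ, 1 ≤ i → Gs (s + 2 * i * k) = (k : ℤ) - Gs (s + (2 * i - 1) * k) := by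
  have hGs : IsOptimalNetScore S Gs := ⟨h0, hG⟩
  have hkS : IsGreatest (S : Set ℕ) k := hk ▸ S.isGreatest_max' hS
  intro s hs i hi
  obtain ⟨m, hm⟩ : ∃ m, 2 * i = m + 1 := ⟨2 * i - 1, by omega⟩
  rw [hm, Nat.add_sub_cancel, hGs.apply_add_mul hpos hkS hs,
    hGs.apply_add_mul hpos hkS hs, alternatingValue]

theorem stmt_7 (S : Finset ℕ) (hS : S.Nonempty) (hpos : ∀ j ∈ S, 0 < j)
    (k : ℕ) (hk : k = S.max' hS)
    (Gs : ℕ → ℤ) (h0 : Gs 0 = 0)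
    (hG : ∀ n : ℕ, 0 < n →
      Gs n = if h : (S.filter (fun j => j ≤ n)).Nonempty
        then (S.filter (fun j => j ≤ n)).sup' h (fun j => (j : ℤ) - Gs (n - j))
        else 0) (hkS : k ∈ S) :
    ∀ s ∈ S, ∀ i : ℕ, 1 ≤ i → Gs (s + 2 * i * k) = (k : ℤ) - Gs (s + (2 * i - 1) * k) :=
  stmt_7_general S hS hpos k hk Gs h0 hG
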